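/- arXiv:2110.06683 — 2 statements merged into one kernel-verified Lean document; each statement's English description precedes it below -/
import Mathlib

section
/- Let M ≥ 1 be an integer and z₀ = exp(iπ/M). Then (1/(M·(1 - z₀))) · ∏_{k=1}^{M-1} ((1 - z₀^(2k)) / (1 - z₀^(2k+1)))^(2k+1) = (-i)^(M-1) · (M/2)^M. -/
/-!
Write `ω = exp (iπ/2M)`, so that `z₀ = ω²` and `1 - z₀ ^ j = ω ^ j * c j` with
`c j = chord ω j = ω⁻ʲ - ωʲ = -2i sin (πj/2M)`. The phases `ω ^ j` only contribute an explicit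
power of `ω`, while `c` is invariant under `j ↦ 2M - j`. Pairing each factor with its mirror
image, the exponents `2k + 1` may be replaced by their average, so
`∏ c (2k) ^ (2k+1) = (∏ c (2k)) ^ (M+1)` and `∏ c (2k+1) ^ (2k+1) = (∏ c (2k+1)) ^ M`.
Finally `∏ (1 - z₀ ^ (2k)) = M` and `∏ (1 - z₀ ^ (2k+1)) = 2`, the values of `(X ^ M - 1) / (X - 1)` and `X ^ M + 1` at `1`.
-/

open Finset Polynomial

section Reflection

variable {α : Type*} [CommMonoid α]

theorem prod_range_pow_two_mul_add_one_add_of_symm {a : ℕ → α} {n : ℕ}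
    (ha : ∀ j < n, a (n - 1 - j) = a j) (r : ℕ) :
    ∏ j ∈ range n, a j ^ (2 * j + 1 + r) = (∏ j ∈ range n, a j) ^ (n + r) := by
  have hreflect : ∏ j ∈ range n, a j ^ j = ∏ j ∈ range n, a j ^ (n - 1 - j) := by
    rw [← prod_range_reflect (fun j => a j ^ j) n]
    exact prod_congr rfl fun j hj => by rw [ha j (mem_range.1 hj)]
  calc ∏ j ∈ range n, a j ^ (2 * j + 1 + r)
      = (∏ j ∈ range n, a j ^ j) * ∏ j ∈ range n, a j ^ (j + 1 + r) := by
        rw [← prod_mul_distrib]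
        exact prod_congr rfl fun j _ => by rw [← pow_add]; ring_nf
    _ = ∏ j ∈ range n, a j ^ (n + r) := by
        rw [hreflect, ← prod_mul_distrib]
        exact prod_congr rfl fun j hj => by
          rw [← pow_add, show n - 1 - j + (j + 1 + r) = n + r by have := mem_range.1 hj; omega]
    _ = (∏ j ∈ range n, a j) ^ (n + r) := prod_pow _ _ _

theorem prod_range_pow_two_mul_add_one_add (x : α) (n r : ℕ) :
    ∏ j ∈ range n, x ^ (2 * j + 1 + r) = (x ^ n) ^ (n + r) := by
  simpa using prod_range_pow_two_mul_add_one_add_of_symm (a := fun _ => x) (fun _ _ => rfl) r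

end Reflection

namespace IsPrimitiveRoot

variable {R : Type*} [CommRing R] [IsDomain R] {ζ : R} {n : ℕ}

theorem pow_half_eq_neg_one (hζ : IsPrimitiveRoot ζ (2 * n)) (hn : 0 < n) : ζ ^ n = -1 :=
  (hζ.pow (by omega) (mul_comm 2 n)).eq_neg_one_of_two_right

theorem prod_one_sub_pow_two_mul_add_one (hζ : IsPrimitiveRoot ζ (2 * n)) (hn : 0 < n) :
    ∏ k ∈ range n, (1 - ζ ^ (2 * k + 1)) = 2 := by
  have hsq : IsPrimitiveRoot (ζ ^ 2) n := hζ.pow (by omega) rfl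
  have h := congrArg (eval 1) (X_pow_sub_C_eq_prod hsq hn (hζ.pow_half_eq_neg_one hn))
  simp only [eval_sub, eval_pow, eval_X, eval_C, one_pow, sub_neg_eq_add, one_add_one_eq_two,
    eval_prod] at h
  rw [h]
  exact prod_congr rfl fun k _ => by rw [← pow_mul, ← pow_succ]

theorem prod_one_sub_pow_two_mul_add_two (hζ : IsPrimitiveRoot ζ (2 * (n + 1))) :
    ∏ k ∈ range n, (1 - ζ ^ (2 * k + 2)) = n + 1 := by
  rw [← (hζ.pow (by omega) rfl).prod_one_sub_pow_eq_order]
  exact prod_congr rfl fun k _ => by rw [← pow_mul, mul_add, mul_one]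

end IsPrimitiveRoot

section Chord

variable {K : Type*} [Field K] {ω : K}

def chord (ω : K) (j : ℕ) : K := (ω ^ j)⁻¹ - ω ^ j

theorem one_sub_pow_two_mul_eq_mul_chord (hω : ω ≠ 0) (j : ℕ) :
    1 - ω ^ (2 * j) = ω ^ j * chord ω j := by
  rw [chord, mul_sub, mul_inv_cancel₀ (pow_ne_zero j hω), ← pow_add, two_mul]

theorem chord_sub {N : ℕ} (hω : ω ^ N = -1) {j : ℕ} (hj : j ≤ N) :
    chord ω (N - j) = chord ω j := by
  have h : ω ^ (N - j) * ω ^ j = -1 := by rw [← pow_add, Nat.sub_add_cancel hj, hω]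
  rw [chord, chord, inv_eq_of_mul_eq_one_right (b := -ω ^ j) (by linear_combination -h),
    inv_eq_of_mul_eq_one_right (b := -ω ^ (N - j)) (by linear_combination -h)]
  ring

theorem chord_ne_zero {N j : ℕ} (hω : IsPrimitiveRoot (ω ^ 2) N) (hj : 0 < j) (hjN : j < N) :
    chord ω j ≠ 0 := by
  intro h
  have h' := one_sub_pow_two_mul_eq_mul_chord (ne_zero_pow two_ne_zero (hω.ne_zero (by omega))) j
  rw [h, mul_zero, pow_mul, sub_eq_zero] at h'
  exact hω.pow_ne_one_of_pos_of_lt hj.ne' hjN h'.symm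

theorem prod_chord_two_mul_add_two {n : ℕ} (hω : IsPrimitiveRoot (ω ^ 2) (2 * (n + 1))) :
    (ω ^ n) ^ (n + 1) * ∏ k ∈ range n, chord ω (2 * k + 2) = n + 1 := by
  rw [← hω.prod_one_sub_pow_two_mul_add_two, ← prod_range_pow_two_mul_add_one_add,
    ← prod_mul_distrib]
  refine prod_congr rfl fun k _ => ?_
  rw [← pow_mul, one_sub_pow_two_mul_eq_mul_chord (ne_zero_pow two_ne_zero (hω.ne_zero (by omega)))]

theorem prod_chord_two_mul_add_one {n : ℕ} (hn : 0 < n) (hω : IsPrimitiveRoot (ω ^ 2) (2 * n)) :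
    (ω ^ n) ^ n * ∏ k ∈ range n, chord ω (2 * k + 1) = 2 := by
  have hphase := prod_range_pow_two_mul_add_one_add ω n 0
  simp only [add_zero] at hphase
  rw [← hω.prod_one_sub_pow_two_mul_add_one hn, ← hphase, ← prod_mul_distrib]
  refine prod_congr rfl fun k _ => ?_
  rw [← pow_mul, one_sub_pow_two_mul_eq_mul_chord (ne_zero_pow two_ne_zero (hω.ne_zero (by omega)))]

theorem prod_Icc_one_sub_pow_div_one_sub_pow_pow (hω : ω ≠ 0) (n : ℕ) :
    ∏ k ∈ Icc 1 n, ((1 - (ω ^ 2) ^ (2 * k)) / (1 - (ω ^ 2) ^ (2 * k + 1))) ^ (2 * k + 1) =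
      (∏ k ∈ range n, chord ω (2 * k + 2) ^ (2 * k + 1 + 2)) /
        ((ω ^ n) ^ (n + 2) * ∏ k ∈ range n, chord ω (2 * k + 3) ^ (2 * k + 3)) := by
  rw [← prod_range_pow_two_mul_add_one_add, ← prod_mul_distrib, ← prod_div_distrib,
    ← Ico_add_one_right_eq_Icc, prod_Ico_eq_prod_range, add_tsub_cancel_right]
  refine prod_congr rfl fun k _ => ?_
  simp only [← pow_mul, one_sub_pow_two_mul_eq_mul_chord hω]
  rw [show 2 * (1 + k) = 2 * k + 2 by ring, show 2 * k + 2 + 1 = 2 * k + 3 by ring,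
    pow_succ ω (2 * k + 2), mul_assoc, mul_div_mul_left _ _ (pow_ne_zero _ hω), div_pow, mul_pow]
  ring

theorem one_div_mul_prod_one_sub_pow_div_one_sub_pow_pow {M : ℕ} (hM : 0 < M)
    (hω : IsPrimitiveRoot (ω ^ 2) (2 * M)) :
    1 / (M * (1 - ω ^ 2)) * ∏ k ∈ Icc 1 (M - 1),
        ((1 - (ω ^ 2) ^ (2 * k)) / (1 - (ω ^ 2) ^ (2 * k + 1))) ^ (2 * k + 1) =
      ((ω ^ M)⁻¹) ^ (M - 1) * ((M : K) / 2) ^ M := by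
  obtain ⟨n, rfl⟩ : ∃ n, M = n + 1 := ⟨M - 1, by omega⟩
  have hω0 : ω ≠ 0 := ne_zero_pow two_ne_zero (hω.ne_zero (by omega))
  have hωN : ω ^ (2 * (n + 1)) = -1 := by rw [pow_mul]; exact hω.pow_half_eq_neg_one (by omega)
  set E := ∏ k ∈ range n, chord ω (2 * k + 2)
  set O := ∏ k ∈ range (n + 1), chord ω (2 * k + 1)
  have hE : (ω ^ n) ^ (n + 1) * E = n + 1 := prod_chord_two_mul_add_two hω
  have hO : (ω ^ (n + 1)) ^ (n + 1) * O = 2 := prod_chord_two_mul_add_one (by omega) hω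
  have hc1 : chord ω 1 ≠ 0 := chord_ne_zero hω one_pos (by omega)
  have hE0 : E ≠ 0 := prod_ne_zero_iff.2 fun k hk =>
    chord_ne_zero hω (by omega) (by have := mem_range.1 hk; omega)
  have hO0 : O ≠ 0 := prod_ne_zero_iff.2 fun k hk =>
    chord_ne_zero hω (by omega) (by have := mem_range.1 hk; omega)
  have hEven : ∏ k ∈ range n, chord ω (2 * k + 2) ^ (2 * k + 1 + 2) = E ^ (n + 2) :=
    prod_range_pow_two_mul_add_one_add_of_symm (fun k hk => by
      rw [show 2 * (n - 1 - k) + 2 = 2 * (n + 1) - (2 * k + 2) by omega]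
      exact chord_sub hωN (by omega)) 2
  have hOdd : ∏ k ∈ range n, chord ω (2 * k + 3) ^ (2 * k + 3) = O ^ (n + 1) / chord ω 1 := by
    rw [eq_div_iff hc1, ← add_zero (n + 1), ← prod_range_pow_two_mul_add_one_add_of_symm
      (fun k hk => by
        rw [show 2 * (n + 1 - 1 - k) + 1 = 2 * (n + 1) - (2 * k + 1) by omega]
        exact chord_sub hωN (by omega)) 0, prod_range_succ' _ n]
    ring_nf
  rw [add_tsub_cancel_right, prod_Icc_one_sub_pow_div_one_sub_pow_pow hω0, hEven, hOdd,
    show 1 - ω ^ 2 = ω * chord ω 1 by simpa using one_sub_pow_two_mul_eq_mul_chord hω0 1]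
  push_cast
  rw [← hE, ← hO]
  simp only [div_pow, mul_pow, inv_pow, ← pow_mul]
  field_simp
  ring

end Chord

/-- For `M ≥ 1` and `z₀ = e^{iπ/M}`,
`(1/(M(1-z₀))) ∏_{k=1}^{M-1} ((1-z₀^{2k})/(1-z₀^{2k+1}))^{2k+1} = (-i)^{M-1} (M/2)^M`. -/
theorem stmt6 (M : ℕ) (hM : 1 ≤ M) (z₀ : ℂ)
    (hz : z₀ = Complex.exp (Real.pi * Complex.I / M)) :
    (1 / (M * (1 - z₀))) *
        ∏ k ∈ Finset.Icc 1 (M - 1),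
          ((1 - z₀ ^ (2 * k)) / (1 - z₀ ^ (2 * k + 1))) ^ (2 * k + 1) =
      (-Complex.I) ^ (M - 1) * ((M : ℂ) / 2) ^ M := by
  set ω := Complex.exp (Real.pi * Complex.I / (2 * M))
  have hM0 : (M : ℂ) ≠ 0 := Nat.cast_ne_zero.2 (by omega)
  have hωz : ω ^ 2 = z₀ := by
    rw [hz, ← Complex.exp_nat_mul]
    congr 1
    push_cast
    field_simp
  have hωM : ω ^ M = Complex.I := by
    rw [← Complex.exp_nat_mul]
    convert Complex.exp_pi_div_two_mul_I using 2
    field_simp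
  have hprim : IsPrimitiveRoot (ω ^ 2) (2 * M) := by
    convert Complex.isPrimitiveRoot_exp (2 * M) (by omega) using 1
    rw [hωz, hz]
    congr 1
    push_cast
    field_simp
  rw [← hωz, one_div_mul_prod_one_sub_pow_div_one_sub_pow_pow hM hprim, hωM, Complex.inv_I]
end

section
/- Let M ≥ 1 be an integer, z₀ = exp(iπ/M), and let p be an integer with |p| ≤ M/2, α = z₀^(2p). Define v(k) = #{x ∈ ℤ : |x| ≤ k and x ≡ p (mod M)} for 0 ≤ k ≤ M-1. Then ∏_{k=1}^{M-1}(1 - z₀^(2k))^(v(k)) / ∏_{k=0}^{M-1}(1 - z₀^(2k+1))^(v(k)) equals M/2 if α = 1, and equals ±z₀^(-p)·(1 - α)·(M/2) if α ≠ 1 (i.e., the quotient equals z₀^(-p)(1-z₀^(2p))·(M/2) up to sign). -/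
/-!
`z₀` is a primitive `2M`-th root of unity and, with `q = |p|`, `v k = [q ≤ k] + [M - q ≤ k]`
for `k < M`. Each product therefore splits into a product over `q ≤ k < M` and one over the top
`q` indices `M - q ≤ k < M`. Since `z₀ ^ (2M) = 1`, the reflection `k ↦ M - 1 - k` turns the top
factors `1 - z₀ ^ (2k + r)` into the bottom factors `1 - z₀ ^ (2k + 2 - r)`, up to a power of
`-z₀`. After this the numerator becomes `(1 - z₀ ^ (2q)) ∏_{1 ≤ k < M} (1 - z₀ ^ (2k)) = (1 - z₀ ^ (2q)) M`
and the denominator `∏_{k < M} (1 - z₀ ^ (2k + 1)) = 2`, the value of `X ^ M + 1` at `1`.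
-/

open Complex Finset

theorem card_filter_Icc_sub_emod_eq_zero {M k : ℕ} {p : ℤ} (hp : 2 * |p| ≤ M) (hk : k < M) :
    #{x ∈ Icc (-(k : ℤ)) k | (x - p) % M = 0} =
      (if p.natAbs ≤ k then 1 else 0) + (if M - p.natAbs ≤ k then 1 else 0) := by
  have hp₁ := le_abs_self p
  have hp₂ := neg_abs_le p
  have hS : {x ∈ Icc (-(k : ℤ)) k | (x - p) % M = 0} =
      {x ∈ ({p - M, p, p + M} : Finset ℤ) | -(k : ℤ) ≤ x ∧ x ≤ k} := by
    ext x
    simp only [mem_filter, mem_Icc, mem_insert, mem_singleton]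
    refine ⟨fun ⟨hx, hmod⟩ ↦ ⟨?_, hx⟩, fun ⟨hx, hx'⟩ ↦ ⟨hx', Int.emod_eq_zero_of_dvd ?_⟩⟩
    · -- `|x - p| ≤ k + |p| < 3M/2`, so `x - p = M t` with `|t| ≤ 1`.
      obtain ⟨t, ht⟩ := Int.dvd_of_emod_eq_zero hmod
      have ht₁ : -2 < t := by by_contra! h; nlinarith
      have ht₂ : t < 2 := by by_contra! h; nlinarith
      interval_cases t <;> omega
    · rcases hx with rfl | rfl | rfl <;> simp
  rw [hS, card_filter, sum_insert (by simp; omega), sum_insert (by simp; omega), sum_singleton]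
  split_ifs <;> omega

theorem prod_pow_eq_prod_filter_mul_prod_filter {ι M : Type*} [CommMonoid M] {s : Finset ι}
    {f : ι → M} {v : ι → ℕ} {P Q : ι → Prop} [DecidablePred P] [DecidablePred Q]
    (hv : ∀ i ∈ s, v i = (if P i then 1 else 0) + (if Q i then 1 else 0)) :
    ∏ i ∈ s, f i ^ v i = (∏ i ∈ s with P i, f i) * ∏ i ∈ s with Q i, f i := by
  rw [prod_filter, prod_filter, ← prod_mul_distrib]
  refine prod_congr rfl fun i hi ↦ ?_
  rw [hv i hi, pow_add]
  split_ifs <;> simp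

theorem pow_mul_prod_Ico_sub_one_sub_pow {R : Type*} [CommRing R] {ζ : R} {M q r s : ℕ}
    (hζ : ζ ^ (2 * M) = 1) (hq : q ≤ M) (hrs : r + s = 2) :
    ζ ^ (q * (q + s)) * ∏ k ∈ Ico (M - q) M, (1 - ζ ^ (2 * k + r)) =
      (-ζ) ^ q * ∏ k ∈ range q, (1 - ζ ^ (2 * k + s)) := by
  induction q with
  | zero => simp
  | succ q ih =>
    rw [prod_eq_prod_Ico_succ_bot (by omega), show M - (q + 1) + 1 = M - q by omega,
      prod_range_succ, show (q + 1) * (q + 1 + s) = q * (q + s) + (2 * q + s + 1) by ring,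
      pow_add]
    have hwrap : ζ ^ (2 * q + s + 1) * ζ ^ (2 * (M - (q + 1)) + r) = ζ := by
      rw [← pow_add, show 2 * q + s + 1 + (2 * (M - (q + 1)) + r) = 2 * M + 1 by omega,
        pow_succ, hζ, one_mul]
    linear_combination (ζ ^ (2 * q + s + 1) * (1 - ζ ^ (2 * (M - (q + 1)) + r))) * ih (by omega) -
      (-ζ) ^ q * (∏ k ∈ range q, (1 - ζ ^ (2 * k + s))) * hwrap

theorem zpow_neg_mul_one_sub_zpow_two_mul {K : Type*} [Field K] {ζ : K} (hζ : ζ ≠ 0) (n : ℤ) :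
    ζ ^ (-n) * (1 - ζ ^ (2 * n)) = ζ ^ (-n) - ζ ^ n := by
  rw [mul_sub, mul_one, ← zpow_add₀ hζ]
  ring_nf

section PrimitiveRoot

variable {K : Type*} [Field K] {ζ : K} {M : ℕ}

theorem IsPrimitiveRoot.prod_Ico_one_sub_pow_two_mul (h : IsPrimitiveRoot ζ (2 * M))
    (hM : 0 < M) : ∏ k ∈ Ico 1 M, (1 - ζ ^ (2 * k)) = M := by
  obtain ⟨n, rfl⟩ := Nat.exists_eq_add_of_lt hM
  simp only [pow_mul]
  rw [prod_Ico_eq_prod_range]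
  simpa [add_comm 1] using (h.pow (by omega) rfl).prod_one_sub_pow_eq_order

theorem IsPrimitiveRoot.prod_range_one_sub_pow_two_mul_add_one (h : IsPrimitiveRoot ζ (2 * M))
    (hM : 0 < M) : ∏ k ∈ range M, (1 - ζ ^ (2 * k + 1)) = 2 := by
  have hsq : IsPrimitiveRoot (ζ ^ 2) M := h.pow (by omega) rfl
  have hhalf : ζ ^ M = -1 := (h.pow (by omega) (mul_comm 2 M)).eq_neg_one_of_two_right
  have := congrArg (Polynomial.eval 1) (X_pow_sub_C_eq_prod hsq hM hhalf)
  simp only [Polynomial.eval_sub, Polynomial.eval_pow, Polynomial.eval_X, Polynomial.eval_C,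
    Polynomial.eval_prod, one_pow, ← pow_mul, ← pow_succ] at this
  rw [← this]
  norm_num

theorem IsPrimitiveRoot.two_ne_zero (h : IsPrimitiveRoot ζ (2 * M)) (hM : 0 < M) :
    (2 : K) ≠ 0 := by
  rw [← h.prod_range_one_sub_pow_two_mul_add_one hM]
  exact prod_ne_zero_iff.mpr fun k hk ↦ sub_ne_zero.mpr
    (h.pow_ne_one_of_pos_of_lt (by omega) (by simp only [mem_range] at hk; omega)).symm

theorem IsPrimitiveRoot.zpow_two_mul_eq_one_iff (h : IsPrimitiveRoot ζ (2 * M)) (hM : 0 < M)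
    {p : ℤ} (hp : 2 * |p| ≤ M) : ζ ^ (2 * p) = 1 ↔ p = 0 := by
  rw [h.zpow_eq_one_iff_dvd]
  refine ⟨fun hdvd ↦ ?_, fun hp0 ↦ by simp [hp0]⟩
  have := Int.eq_zero_of_abs_lt_dvd hdvd (by rw [abs_mul, abs_two]; push_cast; omega)
  omega

theorem IsPrimitiveRoot.pow_mul_prod_one_sub_pow_two_mul (h : IsPrimitiveRoot ζ (2 * M))
    {q : ℕ} (hq : 1 ≤ q) (hqM : q ≤ M) :
    ζ ^ (q * (q + 2)) *
        ((∏ k ∈ Ico q M, (1 - ζ ^ (2 * k))) * ∏ k ∈ Ico (M - q) M, (1 - ζ ^ (2 * k))) =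
      (-ζ) ^ q * ((1 - ζ ^ (2 * q)) * M) := by
  have hreflect := pow_mul_prod_Ico_sub_one_sub_pow h.pow_eq_one hqM (r := 0) (s := 2) rfl
  simp only [add_zero] at hreflect
  have hshift : ∏ k ∈ range q, (1 - ζ ^ (2 * k + 2)) = ∏ k ∈ Ico 1 (q + 1), (1 - ζ ^ (2 * k)) := by
    rw [prod_Ico_eq_prod_range, Nat.add_sub_cancel]
    exact prod_congr rfl fun k _ ↦ by ring_nf
  rw [mul_left_comm, hreflect, hshift, prod_Ico_succ_top hq,
    ← h.prod_Ico_one_sub_pow_two_mul (by omega), ← prod_Ico_consecutive _ hq hqM]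
  ring

theorem IsPrimitiveRoot.pow_mul_prod_one_sub_pow_two_mul_add_one (h : IsPrimitiveRoot ζ (2 * M))
    (hM : 0 < M) {q : ℕ} (hqM : q ≤ M) :
    ζ ^ (q * (q + 1)) * ((∏ k ∈ Ico q M, (1 - ζ ^ (2 * k + 1))) *
      ∏ k ∈ Ico (M - q) M, (1 - ζ ^ (2 * k + 1))) = (-ζ) ^ q * 2 := by
  rw [mul_left_comm, pow_mul_prod_Ico_sub_one_sub_pow h.pow_eq_one hqM rfl,
    ← h.prod_range_one_sub_pow_two_mul_add_one hM, ← prod_range_mul_prod_Ico _ hqM]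
  ring

theorem IsPrimitiveRoot.prod_pow_div_prod_pow_eq_half (h : IsPrimitiveRoot ζ (2 * M))
    (hM : 0 < M) {v : ℕ → ℕ} (hv : ∀ k < M, v k = 1) :
    (∏ k ∈ Ico 1 M, (1 - ζ ^ (2 * k)) ^ v k) / ∏ k ∈ range M, (1 - ζ ^ (2 * k + 1)) ^ v k =
      M / 2 := by
  have hN : ∏ k ∈ Ico 1 M, (1 - ζ ^ (2 * k)) ^ v k = M := by
    rw [← h.prod_Ico_one_sub_pow_two_mul hM]
    exact prod_congr rfl fun k hk ↦ by rw [hv k (mem_Ico.mp hk).2, pow_one]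
  have hD : ∏ k ∈ range M, (1 - ζ ^ (2 * k + 1)) ^ v k = 2 := by
    rw [← h.prod_range_one_sub_pow_two_mul_add_one hM]
    exact prod_congr rfl fun k hk ↦ by rw [hv k (mem_range.mp hk), pow_one]
  rw [hN, hD]

theorem IsPrimitiveRoot.prod_pow_div_prod_pow_eq_zpow_neg_sub_zpow
    (h : IsPrimitiveRoot ζ (2 * M)) {q : ℕ} (hq : 1 ≤ q) (hqM : 2 * q ≤ M) {v : ℕ → ℕ}
    (hv : ∀ k < M, v k = (if q ≤ k then 1 else 0) + (if M - q ≤ k then 1 else 0)) :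
    (∏ k ∈ Ico 1 M, (1 - ζ ^ (2 * k)) ^ v k) / ∏ k ∈ range M, (1 - ζ ^ (2 * k + 1)) ^ v k =
      (ζ ^ (-(q : ℤ)) - ζ ^ (q : ℤ)) * (M / 2) := by
  rw [prod_pow_eq_prod_filter_mul_prod_filter fun k hk ↦ hv k (mem_Ico.mp hk).2,
    prod_pow_eq_prod_filter_mul_prod_filter fun k hk ↦ hv k (mem_range.mp hk), range_eq_Ico,
    Ico_filter_le_of_left_le hq, Ico_filter_le_of_left_le (by omega : 1 ≤ M - q),
    Ico_filter_le_of_left_le (Nat.zero_le q), Ico_filter_le_of_left_le (Nat.zero_le (M - q))]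
  have hN := h.pow_mul_prod_one_sub_pow_two_mul hq (by omega)
  have hD := h.pow_mul_prod_one_sub_pow_two_mul_add_one (by omega) (by omega : q ≤ M)
  have hζ : ζ ≠ 0 := h.ne_zero (by omega)
  have h2 := h.two_ne_zero (by omega)
  have hD0 := right_ne_zero_of_mul <| hD.symm ▸ mul_ne_zero (pow_ne_zero q (neg_ne_zero.mpr hζ)) h2
  rw [div_eq_iff hD0, zpow_neg, zpow_natCast]
  field_simp
  refine mul_left_cancel₀ (pow_ne_zero (q * (q + 1)) hζ) ?_
  linear_combination 2 * hN - (1 - ζ ^ (2 * q)) * M * hD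

end PrimitiveRoot

/-- For `M ≥ 1`, `z₀ = e^{iπ/M}`, `p ∈ ℤ` with `|p| ≤ M/2`, `α = z₀^{2p}`
and `v(k) = #{x ∈ ℤ : |x| ≤ k, x ≡ p (mod M)}`, the quotient
`∏_{k=1}^{M-1}(1-z₀^{2k})^{v(k)} / ∏_{k=0}^{M-1}(1-z₀^{2k+1})^{v(k)}`
equals `M/2` if `α = 1`, and equals `±z₀^{-p}(1-α)·(M/2)` if `α ≠ 1`. -/
theorem stmt7 (M : ℕ) (hM : 1 ≤ M) (z₀ : ℂ)
    (hz : z₀ = Complex.exp (Real.pi * Complex.I / M))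
    (p : ℤ) (hp : 2 * |p| ≤ (M : ℤ)) (α : ℂ) (hα : α = z₀ ^ (2 * p))
    (v : ℕ → ℕ)
    (hv : ∀ k : ℕ, v k =
      ((Finset.Icc (-(k : ℤ)) (k : ℤ)).filter fun x => (x - p) % (M : ℤ) = 0).card) :
    (α = 1 →
      (∏ k ∈ Finset.Icc 1 (M - 1), (1 - z₀ ^ (2 * k)) ^ v k) /
          (∏ k ∈ Finset.range M, (1 - z₀ ^ (2 * k + 1)) ^ v k) = (M : ℂ) / 2) ∧
    (α ≠ 1 →
      (∏ k ∈ Finset.Icc 1 (M - 1), (1 - z₀ ^ (2 * k)) ^ v k) /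
            (∏ k ∈ Finset.range M, (1 - z₀ ^ (2 * k + 1)) ^ v k) =
          z₀ ^ (-p) * (1 - α) * ((M : ℂ) / 2) ∨
      (∏ k ∈ Finset.Icc 1 (M - 1), (1 - z₀ ^ (2 * k)) ^ v k) /
            (∏ k ∈ Finset.range M, (1 - z₀ ^ (2 * k + 1)) ^ v k) =
          -(z₀ ^ (-p) * (1 - α) * ((M : ℂ) / 2))) := by
  have hζ : IsPrimitiveRoot z₀ (2 * M) := by
    have : z₀ = exp (2 * Real.pi * I / ↑(2 * M)) := by rw [hz]; push_cast; field_simp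
    exact this ▸ isPrimitiveRoot_exp _ (by omega)
  have hα1 : α = 1 ↔ p = 0 := hα ▸ hζ.zpow_two_mul_eq_one_iff hM hp
  have hv' (k : ℕ) (hk : k < M) := (hv k).trans (card_filter_Icc_sub_emod_eq_zero hp hk)
  rw [show Icc 1 (M - 1) = Ico 1 M by ext; simp only [mem_Icc, mem_Ico]; omega]
  refine ⟨fun h1 ↦ ?_, fun h1 ↦ ?_⟩
  · obtain rfl := hα1.mp h1
    exact hζ.prod_pow_div_prod_pow_eq_half hM fun k hk ↦ by simpa [not_le.mpr hk] using hv' k hk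
  · have habs : (p.natAbs : ℤ) = |p| := Int.natCast_natAbs p
    rw [hζ.prod_pow_div_prod_pow_eq_zpow_neg_sub_zpow (Int.natAbs_pos.mpr (mt hα1.mpr h1))
      (by omega) hv', hα, zpow_neg_mul_one_sub_zpow_two_mul (hζ.ne_zero (by omega))]
    rcases Int.natAbs_eq p with hpq | hpq <;> generalize p.natAbs = q at hpq ⊢ <;> subst hpq
    · exact .inl rfl
    · exact .inr (by rw [neg_neg]; ring)
end
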